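/- Asymptotic representation when the nuisance parameter does not depend on θ (Corollary 2.3). Assume θ̂_n is a consistent estimator of θ0 (θ̂_n → θ0 in probability) with Ψ_n(θ̂_n, η̂_n) = o_p(n^{-1/2}), θ0 is the unique zero of θ ↦ Ψ(θ, η0) on Θ, ‖η̂_n − η0‖_E = O_p(n^{-β}) for some β ∈ (0, 1/2], and: (i) stochastic equicontinuity: |√n(Ψ_n − Ψ)(θ̂_n, η̂_n) − √n(Ψ_n − Ψ)(θ0, η0)| / (1 + √n|Ψ_n(θ̂_n, η̂_n)| + √n|Ψ(θ̂_n, η̂_n)|) = o_p(1); (ii) √n Ψ_n(θ0, η0) = O_p(1); (iii) smoothness: there exist a nonsingular d×d matrix Ψ̇_θ and a continuous linear map Ψ̇_η : E → ℝ^d such that, as θ → θ0 and ‖η − η0‖_E → 0, |Ψ(θ, η) − Ψ(θ0, η0) − Ψ̇_θ(θ − θ0) − Ψ̇_η[η − η0]| = o(|θ − θ0|) + o(‖η − η0‖_E) if β = 1/2, or = o(|θ − θ0|) + O(‖η − η0‖_E^α) for some α > 1 with αβ > 1/2 if 0 < β < 1/2; (iv) √n Ψ̇_η[η̂_n − η0]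 = O_p(1). Then √n |θ̂_n − θ0| = O_p(1) and √n(θ̂_n − θ0) = (−Ψ̇_θ)^{-1} √n { (Ψ_n − Ψ)(θ0, η0) + Ψ̇_η[η̂_n − η0] } + o_p(1). -/

import Mathlib

open MeasureTheory Filter Topology ProbabilityTheory
open scoped ENNReal NNReal InnerProductSpace

noncomputable section

abbrev Euc (d : ℕ) := EuclideanSpace ℝ (Fin d)

/-- `ξ n / a n → 0` in probability, i.e. `ξ n = o_p(a n)`. -/
def oP {Ω : Type*} [MeasurableSpace Ω] (P : Measure Ω) (ξ : ℕ → Ω → ℝ) (a : ℕ → ℝ) : Prop :=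
  ∀ ε : ℝ, 0 < ε → Filter.Tendsto (fun n => P {ω | ε * a n ≤ ξ n ω}) Filter.atTop (nhds 0)

/-- `ξ n = O_p(a n)`: for every `ε > 0` there is `M` with
`P(ξ n > M * a n) ≤ ε` for all sufficiently large `n`. -/
def OP {Ω : Type*} [MeasurableSpace Ω] (P : Measure Ω) (ξ : ℕ → Ω → ℝ) (a : ℕ → ℝ) : Prop :=
  ∀ ε : ℝ, 0 < ε → ∃ M : ℝ, ∀ᶠ n in Filter.atTop, P {ω | M * a n < ξ n ω} ≤ ENNReal.ofReal ε

open Classical in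
/-- real-valued indicator of a proposition. -/
def ind (p : Prop) : ℝ := if p then 1 else 0

/-!
Write `R` for the linearization remainder of `Ψ` at `(θ0, η0)`. Smoothness, consistency of `θ̂`
and the rate of `η̂` give `√n R(θ̂, η̂) = o_p(1 + √n |θ̂ - θ0|)`. Stochastic equicontinuity,
`√n Ψn(θ̂, η̂) = o_p(1)` and (ii) bound `√n |Ψ(θ̂, η̂)|` by `O_p(1) + o_p(1) √n |Ψ(θ̂, η̂)|`, hence
`√n Ψ(θ̂, η̂) = O_p(1)`. Inverting `Ψ̇_θ` in `Ψ̇_θ(θ̂ - θ0) = Ψ(θ̂, η̂) - Ψ̇_η[η̂ - η0] - R(θ̂, η̂)`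
then bounds `√n |θ̂ - θ0|` by `O_p(1) + o_p(1) (1 + √n |θ̂ - θ0|)`, which forces
`√n |θ̂ - θ0| = O_p(1)`; feeding this back into the same identity makes every error term `o_p(1)`.
-/

section InProbability

variable {Ω : Type*} [MeasurableSpace Ω] {P : Measure Ω}

def EventuallyExcept (P : Measure Ω) (δ : ℝ≥0∞) (p : ℕ → Ω → Prop) : Prop :=
  ∀ᶠ n in atTop, P {ω | ¬ p n ω} ≤ δ

def TendstoProbOne (P : Measure Ω) (p : ℕ → Ω → Prop) : Prop :=
  Tendsto (fun n => P {ω | ¬ p n ω}) atTop (𝓝 0)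

variable {δ δ₁ δ₂ : ℝ≥0∞} {p q : ℕ → Ω → Prop} {X Y r : ℕ → Ω → ℝ}

theorem EventuallyExcept.of_forall (h : ∀ n ω, p n ω) : EventuallyExcept P δ p :=
  Eventually.of_forall fun n => by simp [h n]

theorem EventuallyExcept.mono (h : EventuallyExcept P δ p)
    (hpq : ∀ᶠ n in atTop, ∀ ω, p n ω → q n ω) : EventuallyExcept P δ q := by
  filter_upwards [h, hpq] with n hn hpqn
  exact (measure_mono fun ω (hq : ¬ q n ω) hp => hq (hpqn ω hp)).trans hn

theorem EventuallyExcept.and (hp : EventuallyExcept P δ₁ p) (hq : EventuallyExcept P δ₂ q) :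
    EventuallyExcept P (δ₁ + δ₂) fun n ω => p n ω ∧ q n ω := by
  filter_upwards [hp, hq] with n hpn hqn
  simp only [not_and_or, Set.ofPred_or]
  exact (measure_union_le _ _).trans (add_le_add hpn hqn)

theorem tendstoProbOne_iff : TendstoProbOne P p ↔ ∀ δ > 0, EventuallyExcept P δ p := by
  simp only [TendstoProbOne, EventuallyExcept, ENNReal.tendsto_atTop_zero, eventually_atTop]

theorem TendstoProbOne.mono (h : TendstoProbOne P p) (hpq : ∀ n ω, p n ω → q n ω) :
    TendstoProbOne P q :=
  tendstoProbOne_iff.2 fun δ hδ => (tendstoProbOne_iff.1 h δ hδ).mono (.of_forall hpq)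

theorem TendstoProbOne.and (hp : TendstoProbOne P p) (hq : TendstoProbOne P q) :
    TendstoProbOne P fun n ω => p n ω ∧ q n ω :=
  tendstoProbOne_iff.2 fun δ hδ => by
    have hδ₂ := ENNReal.half_pos hδ.ne'
    simpa only [ENNReal.add_halves] using
      (tendstoProbOne_iff.1 hp _ hδ₂).and (tendstoProbOne_iff.1 hq _ hδ₂)

theorem oP_one_iff :
    oP P X (fun _ => 1) ↔ ∀ ε > 0, TendstoProbOne P fun n ω => X n ω < ε := by
  simp only [oP, TendstoProbOne, mul_one, not_lt]

theorem OP_iff {a : ℕ → ℝ} :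
    OP P X a ↔ ∀ δ > 0, ∃ M, EventuallyExcept P δ fun n ω => X n ω ≤ M * a n := by
  simp only [OP, EventuallyExcept, not_le]
  refine ⟨fun h δ hδ => ?_, fun h ε hε => h _ (ENNReal.ofReal_pos.2 hε)⟩
  rcases eq_or_ne δ ⊤ with rfl | hδtop
  · exact ⟨0, .of_forall fun _ => le_top⟩
  · simpa only [ENNReal.ofReal_toReal hδtop] using h δ.toReal (ENNReal.toReal_pos hδ.ne' hδtop)

theorem OP_one_iff :
    OP P X (fun _ => 1) ↔ ∀ δ > 0, ∃ M, EventuallyExcept P δ fun n ω => X n ω ≤ M := by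
  simp only [OP_iff, mul_one]

theorem OP_const (a : ℝ) : OP P (fun _ _ => a) (fun _ => 1) :=
  OP_one_iff.2 fun _ _ => ⟨a, .of_forall fun _ _ => le_rfl⟩

theorem OP.add (hX : OP P X (fun _ => 1)) (hY : OP P Y (fun _ => 1)) :
    OP P (fun n ω => X n ω + Y n ω) (fun _ => 1) := by
  refine OP_one_iff.2 fun δ hδ => ?_
  obtain ⟨M₁, h₁⟩ := OP_one_iff.1 hX _ (ENNReal.half_pos hδ.ne')
  obtain ⟨M₂, h₂⟩ := OP_one_iff.1 hY _ (ENNReal.half_pos hδ.ne')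
  refine ⟨M₁ + M₂, ?_⟩
  simpa only [ENNReal.add_halves] using
    (h₁.and h₂).mono (.of_forall fun _ _ h => add_le_add h.1 h.2)

theorem OP.const_mul {c : ℝ} (hc : 0 ≤ c) (hX : OP P X (fun _ => 1)) :
    OP P (fun n ω => c * X n ω) (fun _ => 1) :=
  OP_one_iff.2 fun δ hδ =>
    let ⟨M, hM⟩ := OP_one_iff.1 hX δ hδ
    ⟨c * M, hM.mono (.of_forall fun _ _ h => mul_le_mul_of_nonneg_left h hc)⟩

theorem OP.of_tendstoProbOne_le (hY : OP P Y (fun _ => 1))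
    (h : TendstoProbOne P fun n ω => X n ω ≤ Y n ω) : OP P X (fun _ => 1) := by
  refine OP_one_iff.2 fun δ hδ => ?_
  obtain ⟨M, hM⟩ := OP_one_iff.1 hY _ (ENNReal.half_pos hδ.ne')
  refine ⟨M, ?_⟩
  simpa only [ENNReal.add_halves] using
    ((tendstoProbOne_iff.1 h _ (ENNReal.half_pos hδ.ne')).and hM).mono
      (.of_forall fun _ _ h => h.1.trans h.2)

theorem OP.of_oP (h : oP P X (fun _ => 1)) : OP P X (fun _ => 1) :=
  OP_one_iff.2 fun δ hδ =>
    ⟨1, (tendstoProbOne_iff.1 (oP_one_iff.1 h 1 one_pos) δ hδ).mono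
      (.of_forall fun _ _ => le_of_lt)⟩

theorem oP.of_le (h : ∀ n ω, X n ω ≤ Y n ω) (hY : oP P Y (fun _ => 1)) :
    oP P X (fun _ => 1) :=
  oP_one_iff.2 fun ε hε => (oP_one_iff.1 hY ε hε).mono fun n ω => (h n ω).trans_lt

theorem oP.add (hX : oP P X (fun _ => 1)) (hY : oP P Y (fun _ => 1)) :
    oP P (fun n ω => X n ω + Y n ω) (fun _ => 1) :=
  oP_one_iff.2 fun ε hε =>
    ((oP_one_iff.1 hX _ (half_pos hε)).and (oP_one_iff.1 hY _ (half_pos hε))).mono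
      fun _ _ h => by linarith [h.1, h.2]

theorem oP.mul_OP (hX₀ : ∀ n ω, 0 ≤ X n ω) (hX : oP P X (fun _ => 1))
    (hY : OP P Y (fun _ => 1)) : oP P (fun n ω => X n ω * Y n ω) (fun _ => 1) := by
  refine oP_one_iff.2 fun ε hε => tendstoProbOne_iff.2 fun δ hδ => ?_
  obtain ⟨M, hM⟩ := OP_one_iff.1 hY _ (ENNReal.half_pos hδ.ne')
  have hM₁ : 0 < |M| + 1 := by positivity
  have hX' := tendstoProbOne_iff.1 (oP_one_iff.1 hX (ε / (|M| + 1)) (by positivity)) _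
    (ENNReal.half_pos hδ.ne')
  simpa only [ENNReal.add_halves] using (hX'.and hM).mono (.of_forall fun n ω h => calc
    X n ω * Y n ω ≤ X n ω * (|M| + 1) :=
      mul_le_mul_of_nonneg_left (h.2.trans ((le_abs_self M).trans (by linarith))) (hX₀ n ω)
    _ < ε := (lt_div_iff₀ hM₁).1 h.1)

theorem OP_of_le_add_mul_one_add (hY : OP P Y (fun _ => 1)) (hr : oP P r (fun _ => 1))
    (hX₀ : ∀ n ω, 0 ≤ X n ω) (h : ∀ n ω, X n ω ≤ Y n ω + r n ω * (1 + X n ω)) :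
    OP P X (fun _ => 1) :=
  -- where `r < 1 / 2`, the bound rearranges to `X ≤ 2 * Y + 1`
  ((hY.const_mul zero_le_two).add (OP_const 1)).of_tendstoProbOne_le <|
    (oP_one_iff.1 hr (1 / 2) one_half_pos).mono fun n ω hr => by
      have h₁ : 0 ≤ 1 + X n ω := by linarith [hX₀ n ω]
      nlinarith [h n ω, mul_le_mul_of_nonneg_right hr.le h₁]

end InProbability

section Remainder

variable {F E G : Type*} [SeminormedAddCommGroup F] [SeminormedAddCommGroup E]
  [SeminormedAddCommGroup G] {R : F → E → G} {θ0 : F} {η0 : E} {β : ℝ}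

def IsNegligibleRemainder (R : F → E → G) (θ0 : F) (η0 : E) (β : ℝ) : Prop :=
  ∀ M : ℝ, 0 ≤ M → ∀ ε : ℝ, 0 < ε → ∃ δ > 0, ∀ᶠ n : ℕ in atTop, ∀ θ η,
    ‖θ - θ0‖ < δ → ‖η - η0‖ ≤ M * (n : ℝ) ^ (-β) →
      Real.sqrt n * ‖R θ η‖ ≤ ε * (1 + Real.sqrt n * ‖θ - θ0‖)

theorem tendsto_const_mul_natCast_rpow_neg (M : ℝ) (hβ : 0 < β) :
    Tendsto (fun n : ℕ => M * (n : ℝ) ^ (-β)) atTop (𝓝 0) := by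
  simpa using ((tendsto_rpow_neg_atTop hβ).comp tendsto_natCast_atTop_atTop).const_mul M

theorem isNegligibleRemainder_of_le_mul_add_mul
    (h : ∀ ε : ℝ, 0 < ε → ∃ δ : ℝ, 0 < δ ∧ ∀ θ η, ‖θ - θ0‖ < δ → ‖η - η0‖ < δ →
      ‖R θ η‖ ≤ ε * ‖θ - θ0‖ + ε * ‖η - η0‖) :
    IsNegligibleRemainder R θ0 η0 (1 / 2) := by
  intro M hM ε hε
  obtain ⟨δ, hδ, hR⟩ := h (ε / (M + 1)) (by positivity)
  refine ⟨δ, hδ, ?_⟩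
  filter_upwards [(tendsto_const_mul_natCast_rpow_neg M one_half_pos).eventually_lt_const hδ,
    eventually_gt_atTop 0] with n hnδ hn θ η hθ hη
  have hsqrt : Real.sqrt n * (n : ℝ) ^ (-(1 / 2 : ℝ)) = 1 := by
    rw [Real.rpow_neg (Nat.cast_nonneg n), ← Real.sqrt_eq_rpow,
      mul_inv_cancel₀ (Real.sqrt_ne_zero'.2 (Nat.cast_pos.2 hn))]
  have hsη : Real.sqrt n * ‖η - η0‖ ≤ M := calc
    Real.sqrt n * ‖η - η0‖ ≤ Real.sqrt n * (M * (n : ℝ) ^ (-(1 / 2 : ℝ))) :=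
      mul_le_mul_of_nonneg_left hη (Real.sqrt_nonneg n)
    _ = M := by rw [mul_left_comm, hsqrt, mul_one]
  calc Real.sqrt n * ‖R θ η‖
      ≤ Real.sqrt n * (ε / (M + 1) * ‖θ - θ0‖ + ε / (M + 1) * ‖η - η0‖) :=
        mul_le_mul_of_nonneg_left (hR θ η hθ (hη.trans_lt hnδ)) (Real.sqrt_nonneg n)
    _ = ε / (M + 1) * (Real.sqrt n * ‖θ - θ0‖ + Real.sqrt n * ‖η - η0‖) := by ring
    _ ≤ ε / (M + 1) * ((M + 1) * (1 + Real.sqrt n * ‖θ - θ0‖)) := by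
        gcongr
        nlinarith [mul_nonneg (Real.sqrt_nonneg n) (norm_nonneg (θ - θ0))]
    _ = ε * (1 + Real.sqrt n * ‖θ - θ0‖) := by field_simp

theorem sqrt_mul_rpow_le {x M α : ℝ} {n : ℕ} (hα : 0 ≤ α) (hM : 0 ≤ M) (hx₀ : 0 ≤ x)
    (hn : 0 < n) (hx : x ≤ M * (n : ℝ) ^ (-β)) :
    Real.sqrt n * x ^ α ≤ M ^ α * (n : ℝ) ^ (-(α * β - 1 / 2)) := by
  have hn' : (0 : ℝ) < n := Nat.cast_pos.2 hn
  calc Real.sqrt n * x ^ α ≤ Real.sqrt n * (M * (n : ℝ) ^ (-β)) ^ α := by gcongr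
    _ = M ^ α * (n : ℝ) ^ (-(α * β - 1 / 2)) := by
      rw [Real.mul_rpow hM (by positivity), ← Real.rpow_mul hn'.le, Real.sqrt_eq_rpow,
        show -(α * β - 1 / 2) = 1 / 2 + -β * α by ring, Real.rpow_add hn']
      ring

theorem isNegligibleRemainder_of_le_mul_add_rpow {α C : ℝ} (hα : 0 ≤ α) (hαβ : 1 / 2 < α * β)
    (h : ∀ ε : ℝ, 0 < ε → ∃ δ : ℝ, 0 < δ ∧ ∀ θ η, ‖θ - θ0‖ < δ → ‖η - η0‖ < δ →
      ‖R θ η‖ ≤ ε * ‖θ - θ0‖ + C * ‖η - η0‖ ^ α) :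
    IsNegligibleRemainder R θ0 η0 β := by
  intro M hM ε hε
  obtain ⟨δ, hδ, hR⟩ := h ε hε
  refine ⟨δ, hδ, ?_⟩
  have hβ : 0 < β := pos_of_mul_pos_right (by linarith) hα
  have hsmall := tendsto_const_mul_natCast_rpow_neg (|C| * M ^ α)
    (show 0 < α * β - 1 / 2 by linarith)
  filter_upwards [(tendsto_const_mul_natCast_rpow_neg M hβ).eventually_lt_const hδ,
    hsmall.eventually_le_const hε, eventually_gt_atTop 0] with n hnδ hnε hn θ η hθ hη
  have hCη : Real.sqrt n * (C * ‖η - η0‖ ^ α) ≤ ε := calc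
    Real.sqrt n * (C * ‖η - η0‖ ^ α) ≤ |C| * (Real.sqrt n * ‖η - η0‖ ^ α) := by
      rw [mul_left_comm]
      exact mul_le_mul_of_nonneg_right (le_abs_self C) (by positivity)
    _ ≤ |C| * (M ^ α * (n : ℝ) ^ (-(α * β - 1 / 2))) :=
      mul_le_mul_of_nonneg_left (sqrt_mul_rpow_le hα hM (norm_nonneg _) hn hη) (abs_nonneg C)
    _ ≤ ε := by rw [← mul_assoc]; exact hnε
  calc Real.sqrt n * ‖R θ η‖ ≤ Real.sqrt n * (ε * ‖θ - θ0‖ + C * ‖η - η0‖ ^ α) :=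
        mul_le_mul_of_nonneg_left (hR θ η hθ (hη.trans_lt hnδ)) (Real.sqrt_nonneg n)
    _ ≤ ε * (1 + Real.sqrt n * ‖θ - θ0‖) := by nlinarith

theorem oP_div_of_isNegligibleRemainder {Ω : Type*} [MeasurableSpace Ω] {P : Measure Ω}
    {θhat : ℕ → Ω → F} {ηhat : ℕ → Ω → E} (hR : IsNegligibleRemainder R θ0 η0 β)
    (hθ : oP P (fun n ω => ‖θhat n ω - θ0‖) (fun _ => 1))
    (hη : OP P (fun n ω => ‖ηhat n ω - η0‖) (fun n => (n : ℝ) ^ (-β))) :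
    oP P (fun n ω => Real.sqrt n * ‖R (θhat n ω) (ηhat n ω)‖ /
      (1 + Real.sqrt n * ‖θhat n ω - θ0‖)) (fun _ => 1) := by
  refine oP_one_iff.2 fun ε hε => tendstoProbOne_iff.2 fun δ hδ => ?_
  obtain ⟨M, hM⟩ := OP_iff.1 hη _ (ENNReal.half_pos hδ.ne')
  obtain ⟨ρ, hρ, hRρ⟩ := hR (max M 0) (le_max_right _ _) (ε / 2) (half_pos hε)
  have hθρ := tendstoProbOne_iff.1 (oP_one_iff.1 hθ ρ hρ) _ (ENNReal.half_pos hδ.ne')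
  simpa only [ENNReal.add_halves] using (hθρ.and hM).mono <| hRρ.mono fun n hn ω h => by
    have hbound := hn _ _ h.1 (h.2.trans (mul_le_mul_of_nonneg_right (le_max_left _ _)
      (Real.rpow_nonneg (Nat.cast_nonneg n) _)))
    have hT : 0 ≤ Real.sqrt n * ‖θhat n ω - θ0‖ := by positivity
    rw [div_lt_iff₀ (by positivity)]
    nlinarith

end Remainder

section Linearization

variable {F : Type*} [SeminormedAddCommGroup F] [NormedSpace ℝ F]

theorem mul_norm_le_norm_smul_sub_sub {s : ℝ} (hs : 0 ≤ s) (a b w : F) :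
    s * ‖b‖ ≤ ‖s • (a - b) - s • w‖ + s * ‖a‖ + s * ‖w‖ := by
  have h : s • b = s • a - (s • (a - b) - s • w) - s • w := by module
  rw [← norm_smul_of_nonneg hs, ← norm_smul_of_nonneg hs, ← norm_smul_of_nonneg hs, h]
  linarith [norm_sub_le (s • a - (s • (a - b) - s • w)) (s • w),
    norm_sub_le (s • a) (s • (a - b) - s • w)]

theorem norm_le_of_linearization (A : F ≃L[ℝ] F) {t b g R : F} (hlin : A t = g + R - b) :
    ‖t‖ ≤ ‖(A.symm : F →L[ℝ] F)‖ * (‖b‖ + ‖g‖ + ‖R‖) := calc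
  ‖t‖ = ‖(A.symm : F →L[ℝ] F) (g + R - b)‖ := by rw [← hlin]; simp
  _ ≤ ‖(A.symm : F →L[ℝ] F)‖ * ‖g + R - b‖ := ContinuousLinearMap.le_opNorm _ _
  _ ≤ ‖(A.symm : F →L[ℝ] F)‖ * (‖b‖ + ‖g‖ + ‖R‖) := by
    gcongr
    linarith [norm_sub_le (g + R) b, norm_add_le g R]

theorem norm_smul_sub_symm_le (A : F ≃L[ℝ] F) {s : ℝ} (hs : 0 ≤ s) {a b w g t R : F}
    (hlin : A t = g + R - b) :
    ‖s • t - A.symm (s • (w + g))‖ ≤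
      ‖(A.symm : F →L[ℝ] F)‖ * (‖s • (a - b) - s • w‖ + s * ‖a‖ + s * ‖R‖) := by
  have h : s • t - A.symm (s • (w + g)) = A.symm ((s • (a - b) - s • w) - s • a + s • R) := by
    rw [← A.symm_apply_apply t, ← map_smul, ← map_sub, hlin]
    congr 1
    module
  rw [h, ← norm_smul_of_nonneg hs a, ← norm_smul_of_nonneg hs R]
  refine ((A.symm : F →L[ℝ] F).le_opNorm _).trans ?_
  gcongr
  linarith [norm_add_le (s • (a - b) - s • w - s • a) (s • R),
    norm_sub_le (s • (a - b) - s • w) (s • a)]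

variable {Ω : Type*} [MeasurableSpace Ω] {P : Measure Ω} {s : ℕ → ℝ}

theorem OP_mul_norm_of_equicontinuity (hs : ∀ n, 0 ≤ s n) {a b w : ℕ → Ω → F}
    (hse : oP P (fun n ω => ‖s n • (a n ω - b n ω) - s n • w n ω‖ /
      (1 + s n * ‖a n ω‖ + s n * ‖b n ω‖)) (fun _ => 1))
    (ha : oP P (fun n ω => s n * ‖a n ω‖) (fun _ => 1))
    (hw : OP P (fun n ω => s n * ‖w n ω‖) (fun _ => 1)) :
    OP P (fun n ω => s n * ‖b n ω‖) (fun _ => 1) := by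
  have hden : ∀ n ω, 0 < 1 + s n * ‖a n ω‖ + s n * ‖b n ω‖ := fun n ω => by
    linarith [mul_nonneg (hs n) (norm_nonneg (a n ω)), mul_nonneg (hs n) (norm_nonneg (b n ω))]
  have hra := hse.mul_OP (fun n ω => div_nonneg (norm_nonneg _) (hden n ω).le) (OP.of_oP ha)
  refine OP_of_le_add_mul_one_add (((OP.of_oP ha).add hw).add (OP.of_oP hra)) hse
    (fun n ω => mul_nonneg (hs n) (norm_nonneg _)) fun n ω => ?_
  have hD := mul_norm_le_norm_smul_sub_sub (hs n) (a n ω) (b n ω) (w n ω)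
  have hr := div_mul_cancel₀ ‖s n • (a n ω - b n ω) - s n • w n ω‖ (hden n ω).ne'
  linear_combination hD - hr

theorem OP_mul_norm_of_linearization (A : F ≃L[ℝ] F) (hs : ∀ n, 0 ≤ s n)
    {b g t R : ℕ → Ω → F} (hlin : ∀ n ω, A (t n ω) = g n ω + R n ω - b n ω)
    (hb : OP P (fun n ω => s n * ‖b n ω‖) (fun _ => 1))
    (hg : OP P (fun n ω => s n * ‖g n ω‖) (fun _ => 1))
    (hR : oP P (fun n ω => s n * ‖R n ω‖ / (1 + s n * ‖t n ω‖)) (fun _ => 1)) :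
    OP P (fun n ω => s n * ‖t n ω‖) (fun _ => 1) := by
  have hden : ∀ n ω, 0 < 1 + s n * ‖t n ω‖ := fun n ω => by
    linarith [mul_nonneg (hs n) (norm_nonneg (t n ω))]
  refine OP_of_le_add_mul_one_add ((hb.add hg).const_mul (norm_nonneg (A.symm : F →L[ℝ] F)))
    (hR.mul_OP (fun n ω => div_nonneg (mul_nonneg (hs n) (norm_nonneg (R n ω))) (hden n ω).le)
      (OP_const ‖(A.symm : F →L[ℝ] F)‖))
    (fun n ω => mul_nonneg (hs n) (norm_nonneg _)) fun n ω => ?_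
  have hT := mul_le_mul_of_nonneg_left (norm_le_of_linearization A (hlin n ω)) (hs n)
  have hV := div_mul_cancel₀ (s n * ‖R n ω‖) (hden n ω).ne'
  linear_combination hT - ‖(A.symm : F →L[ℝ] F)‖ * hV

theorem oP_norm_smul_sub_of_linearization (A : F ≃L[ℝ] F) (hs : ∀ n, 0 ≤ s n)
    {a b w g t R : ℕ → Ω → F} (hlin : ∀ n ω, A (t n ω) = g n ω + R n ω - b n ω)
    (hse : oP P (fun n ω => ‖s n • (a n ω - b n ω) - s n • w n ω‖ /
      (1 + s n * ‖a n ω‖ + s n * ‖b n ω‖)) (fun _ => 1))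
    (ha : oP P (fun n ω => s n * ‖a n ω‖) (fun _ => 1))
    (hb : OP P (fun n ω => s n * ‖b n ω‖) (fun _ => 1))
    (ht : OP P (fun n ω => s n * ‖t n ω‖) (fun _ => 1))
    (hR : oP P (fun n ω => s n * ‖R n ω‖ / (1 + s n * ‖t n ω‖)) (fun _ => 1)) :
    oP P (fun n ω => ‖s n • t n ω - A.symm (s n • (w n ω + g n ω))‖) (fun _ => 1) := by
  set c := ‖(A.symm : F →L[ℝ] F)‖
  have hc : 0 ≤ c := norm_nonneg _
  have hsa : ∀ n ω, 0 ≤ s n * ‖a n ω‖ := fun n ω => mul_nonneg (hs n) (norm_nonneg _)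
  have hsb : ∀ n ω, 0 ≤ s n * ‖b n ω‖ := fun n ω => mul_nonneg (hs n) (norm_nonneg _)
  have hst : ∀ n ω, 0 ≤ s n * ‖t n ω‖ := fun n ω => mul_nonneg (hs n) (norm_nonneg _)
  have hden₁ : ∀ n ω, 0 < 1 + s n * ‖a n ω‖ + s n * ‖b n ω‖ := fun n ω => by
    linarith [hsa n ω, hsb n ω]
  have hden₂ : ∀ n ω, 0 < 1 + s n * ‖t n ω‖ := fun n ω => by linarith [hst n ω]
  -- the error is at most `c * (D + s ‖a‖ + s ‖R‖)`, `D` the numerator in `hse`; `D` and `s ‖R‖`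
  -- are `o_p(1)` ratios times `O_p(1)` denominators
  refine oP.of_le (fun n ω => ?_)
    (((hse.mul_OP (fun n ω => div_nonneg (norm_nonneg _) (hden₁ n ω).le)
        ((((OP_const 1).add (OP.of_oP ha)).add hb).const_mul hc)).add
      (ha.mul_OP hsa (OP_const c))).add
      (hR.mul_OP (fun n ω => div_nonneg (mul_nonneg (hs n) (norm_nonneg (R n ω))) (hden₂ n ω).le)
        (((OP_const 1).add ht).const_mul hc)))
  have hF := norm_smul_sub_symm_le A (hs n) (a := a n ω) (w := w n ω) (hlin n ω)
  have hD := div_mul_cancel₀ ‖s n • (a n ω - b n ω) - s n • w n ω‖ (hden₁ n ω).ne'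
  have hV := div_mul_cancel₀ (s n * ‖R n ω‖) (hden₂ n ω).ne'
  linear_combination hF - c * hD - c * hV

end Linearization

theorem corollary_2_3_unbundled_Z_estimator_general
    {d : ℕ} {E : Type*} [NormedAddCommGroup E] [NormedSpace ℝ E]
    {Ω : Type*} [MeasurableSpace Ω] (P : Measure Ω)
    (θ0 : Euc d)
    (Ψn : ℕ → Ω → Euc d → E → Euc d)
    (Ψ : Euc d → E → Euc d)
    (η0 : E)
    (hzero : Ψ θ0 η0 = 0)
    (θhat : ℕ → Ω → Euc d)
    (ηhat : ℕ → Ω → E)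
    (hcons : oP P (fun n ω => ‖θhat n ω - θ0‖) (fun _ => 1))
    (hroot : oP P (fun n ω => Real.sqrt n * ‖Ψn n ω (θhat n ω) (ηhat n ω)‖) (fun _ => 1))
    (β : ℝ)
    (hηrate : OP P (fun n ω => ‖ηhat n ω - η0‖) (fun n => (n : ℝ) ^ (-β)))
    -- (i) stochastic equicontinuity
    (hse : oP P (fun n ω =>
        ‖(Real.sqrt n) • (Ψn n ω (θhat n ω) (ηhat n ω) - Ψ (θhat n ω) (ηhat n ω)) -
          (Real.sqrt n) • (Ψn n ω θ0 η0 - Ψ θ0 η0)‖ /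
          (1 + Real.sqrt n * ‖Ψn n ω (θhat n ω) (ηhat n ω)‖ +
            Real.sqrt n * ‖Ψ (θhat n ω) (ηhat n ω)‖)) (fun _ => 1))
    -- (ii)
    (htight : OP P (fun n ω => Real.sqrt n * ‖Ψn n ω θ0 η0‖) (fun _ => 1))
    -- (iii) smoothness with nonsingular Ψ̇_θ
    (Ψdotθ : Euc d →L[ℝ] Euc d) (Ψdotη : E →L[ℝ] Euc d)
    (A : Euc d ≃L[ℝ] Euc d) (hA : ∀ v : Euc d, A v = -(Ψdotθ v))
    (hsmooth :
      (β = 1 / 2 ∧ ∀ ε : ℝ, 0 < ε → ∃ δ : ℝ, 0 < δ ∧ ∀ θ : Euc d, ∀ η : E,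
          ‖θ - θ0‖ < δ → ‖η - η0‖ < δ →
          ‖Ψ θ η - Ψ θ0 η0 - (Ψdotθ (θ - θ0) + Ψdotη (η - η0))‖ ≤
            ε * ‖θ - θ0‖ + ε * ‖η - η0‖) ∨
      (β < 1 / 2 ∧ ∃ α : ℝ, 1 < α ∧ 1 / 2 < α * β ∧ ∃ Cs : ℝ, ∀ ε : ℝ, 0 < ε →
          ∃ δ : ℝ, 0 < δ ∧ ∀ θ : Euc d, ∀ η : E,
          ‖θ - θ0‖ < δ → ‖η - η0‖ < δ →
          ‖Ψ θ η - Ψ θ0 η0 - (Ψdotθ (θ - θ0) + Ψdotη (η - η0))‖ ≤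
            ε * ‖θ - θ0‖ + Cs * ‖η - η0‖ ^ α))
    -- (iv)
    (hiv : OP P (fun n ω => Real.sqrt n * ‖Ψdotη (ηhat n ω - η0)‖) (fun _ => 1)) :
    OP P (fun n ω => Real.sqrt n * ‖θhat n ω - θ0‖) (fun _ => 1) ∧
    oP P (fun n ω =>
      ‖(Real.sqrt n) • (θhat n ω - θ0) -
        A.symm ((Real.sqrt n) • ((Ψn n ω θ0 η0 - Ψ θ0 η0) + Ψdotη (ηhat n ω - η0)))‖)
      (fun _ => 1) := by
  let R θ η := Ψ θ η - Ψ θ0 η0 - (Ψdotθ (θ - θ0) + Ψdotη (η - η0))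
  have hR : IsNegligibleRemainder R θ0 η0 β := by
    rcases hsmooth with ⟨rfl, h⟩ | ⟨-, α, hα, hαβ, C, h⟩
    · exact isNegligibleRemainder_of_le_mul_add_mul h
    · exact isNegligibleRemainder_of_le_mul_add_rpow (zero_le_one.trans hα.le) hαβ h
  have hlin : ∀ n ω, A (θhat n ω - θ0) =
      Ψdotη (ηhat n ω - η0) + R (θhat n ω) (ηhat n ω) - Ψ (θhat n ω) (ηhat n ω) := by
    intro n ω
    simp only [R, hA, hzero]
    abel
  have hs : ∀ n : ℕ, 0 ≤ Real.sqrt n := fun n => Real.sqrt_nonneg n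
  have hρ := oP_div_of_isNegligibleRemainder hR hcons hηrate
  simp only [hzero, sub_zero] at hse ⊢
  have hΨ := OP_mul_norm_of_equicontinuity hs hse hroot htight
  have hθ := OP_mul_norm_of_linearization A hs hlin hΨ hiv hρ
  exact ⟨hθ, oP_norm_smul_sub_of_linearization A hs hlin hse hroot hΨ hθ hρ⟩

/-- Corollary 2.3: asymptotic representation when the nuisance parameter
does not depend on θ. -/
theorem corollary_2_3_unbundled_Z_estimator
    {d : ℕ} (hd : 1 ≤ d) {E : Type*} [NormedAddCommGroup E] [NormedSpace ℝ E]
    {Ω : Type*} [MeasurableSpace Ω] (P : Measure Ω) [IsProbabilityMeasure P]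
    (Θ : Set (Euc d)) (hΘ : IsCompact Θ)
    (θ0 : Euc d) (hθ0 : θ0 ∈ Θ)
    (Ψn : ℕ → Ω → Euc d → E → Euc d)
    (Ψ : Euc d → E → Euc d)
    (η0 : E)
    (hzero : Ψ θ0 η0 = 0)
    (huniq : ∀ θ ∈ Θ, Ψ θ η0 = 0 → θ = θ0)
    (θhat : ℕ → Ω → Euc d) (hθhatΘ : ∀ n ω, θhat n ω ∈ Θ)
    (ηhat : ℕ → Ω → E)
    (hcons : oP P (fun n ω => ‖θhat n ω - θ0‖) (fun _ => 1))
    (hroot : oP P (fun n ω => Real.sqrt n * ‖Ψn n ω (θhat n ω) (ηhat n ω)‖) (fun _ => 1))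
    (β : ℝ) (hβpos : 0 < β) (hβle : β ≤ 1 / 2)
    (hηrate : OP P (fun n ω => ‖ηhat n ω - η0‖) (fun n => (n : ℝ) ^ (-β)))
    -- (i) stochastic equicontinuity
    (hse : oP P (fun n ω =>
        ‖(Real.sqrt n) • (Ψn n ω (θhat n ω) (ηhat n ω) - Ψ (θhat n ω) (ηhat n ω)) -
          (Real.sqrt n) • (Ψn n ω θ0 η0 - Ψ θ0 η0)‖ /
          (1 + Real.sqrt n * ‖Ψn n ω (θhat n ω) (ηhat n ω)‖ +
            Real.sqrt n * ‖Ψ (θhat n ω) (ηhat n ω)‖)) (fun _ => 1))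
    -- (ii)
    (htight : OP P (fun n ω => Real.sqrt n * ‖Ψn n ω θ0 η0‖) (fun _ => 1))
    -- (iii) smoothness with nonsingular Ψ̇_θ
    (Ψdotθ : Euc d →L[ℝ] Euc d) (Ψdotη : E →L[ℝ] Euc d)
    (A : Euc d ≃L[ℝ] Euc d) (hA : ∀ v : Euc d, A v = -(Ψdotθ v))
    (hsmooth :
      (β = 1 / 2 ∧ ∀ ε : ℝ, 0 < ε → ∃ δ : ℝ, 0 < δ ∧ ∀ θ : Euc d, ∀ η : E,
          ‖θ - θ0‖ < δ → ‖η - η0‖ < δ →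
          ‖Ψ θ η - Ψ θ0 η0 - (Ψdotθ (θ - θ0) + Ψdotη (η - η0))‖ ≤
            ε * ‖θ - θ0‖ + ε * ‖η - η0‖) ∨
      (β < 1 / 2 ∧ ∃ α : ℝ, 1 < α ∧ 1 / 2 < α * β ∧ ∃ Cs : ℝ, ∀ ε : ℝ, 0 < ε →
          ∃ δ : ℝ, 0 < δ ∧ ∀ θ : Euc d, ∀ η : E,
          ‖θ - θ0‖ < δ → ‖η - η0‖ < δ →
          ‖Ψ θ η - Ψ θ0 η0 - (Ψdotθ (θ - θ0) + Ψdotη (η - η0))‖ ≤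
            ε * ‖θ - θ0‖ + Cs * ‖η - η0‖ ^ α))
    -- (iv)
    (hiv : OP P (fun n ω => Real.sqrt n * ‖Ψdotη (ηhat n ω - η0)‖) (fun _ => 1)) :
    OP P (fun n ω => Real.sqrt n * ‖θhat n ω - θ0‖) (fun _ => 1) ∧
    oP P (fun n ω =>
      ‖(Real.sqrt n) • (θhat n ω - θ0) -
        A.symm ((Real.sqrt n) • ((Ψn n ω θ0 η0 - Ψ θ0 η0) + Ψdotη (ηhat n ω - η0)))‖)
      (fun _ => 1) :=
  corollary_2_3_unbundled_Z_estimator_general P θ0 Ψn Ψ η0 hzero θhat ηhat hcons hroot β hηrate hse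
    htight Ψdotθ Ψdotη A hA hsmooth hiv
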